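/- Let (x_i) be a sequence in ℝ^k (k ∈ ℕ) such that the series ∑_i x_i is absolutely convergent, and let n ∈ ℕ. Then S(F_n) ⊆ S(F_{n+1}) ⊆ S(E(x_i)) and S(E_{n+1}) ⊆ S(E_n) ⊆ S(E(x_i)). -/

import Mathlib

/-- The spectre of a set `A` in an abelian group. -/
def spectre {X : Type*} [AddCommGroup X] (A : Set X) : Set X :=
  {z | ∀ x ∈ A, x + z ∈ A ∨ x - z ∈ A}

/-- The achievement set of a series: the set of all its subsums. -/
def achievementSet {X : Type*} [AddCommGroup X] [TopologicalSpace X] (x : ℕ → X) : Set X :=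
  {y | ∃ A : Set ℕ, y = ∑' i : A, x i}

/-- The set of `n`-initial subsums: sums over sets of indices among the first `n`. -/
def initialSubsums {X : Type*} [AddCommGroup X] [TopologicalSpace X]
    (x : ℕ → X) (n : ℕ) : Set X :=
  {y | ∃ A : Set ℕ, A ⊆ {i | i < n} ∧ y = ∑' i : A, x i}

/-- The set of subsums of the `n`-th remainder of the series. -/
def remainderSubsums {X : Type*} [AddCommGroup X] [TopologicalSpace X]
    (x : ℕ → X) (n : ℕ) : Set X :=
  {y | ∃ A : Set ℕ, A ⊆ {i | n ≤ i} ∧ y = ∑' i : A, x i}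

/-!
Adding a fixed set never shrinks a spectre: if `z ∈ S(B)` and `a + b ∈ A + B`, then `b ± z ∈ B`
for one of the signs, whence `a + b ± z ∈ A + B`. For an index set `D ⊆ D'`, the subsums over
`D'` are exactly the sums of a subsum over `D' \ D` and one over `D`, so the spectre of the
subsums grows with the index set. All four inclusions are instances of this monotonicity.
-/

open Pointwise

lemma spectre_subset_spectre_add {X : Type*} [AddCommGroup X] (A B : Set X) :
    spectre B ⊆ spectre (A + B) := by
  rintro z hz _ ⟨a, ha, b, hb, rfl⟩
  rcases hz b hb with hplus | hminus
  · exact .inl (by rw [add_assoc]; exact Set.add_mem_add ha hplus)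
  · exact .inr (by rw [add_sub_assoc]; exact Set.add_mem_add ha hminus)

def subsumsOver {X : Type*} [AddCommGroup X] [TopologicalSpace X]
    (x : ℕ → X) (D : Set ℕ) : Set X :=
  {y | ∃ A : Set ℕ, A ⊆ D ∧ y = ∑' i : A, x i}

section Subsums

variable {X : Type*} [AddCommGroup X] [UniformSpace X] [IsUniformAddGroup X] [CompleteSpace X]
  [T2Space X] {x : ℕ → X}

lemma subsumsOver_union (hx : Summable x) {D₁ D₂ : Set ℕ} (hD : Disjoint D₁ D₂) :
    subsumsOver x (D₁ ∪ D₂) = subsumsOver x D₁ + subsumsOver x D₂ := by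
  ext y
  constructor
  · rintro ⟨A, hA, rfl⟩
    have hsplit : A = A ∩ D₁ ∪ A ∩ D₂ := by
      rw [← Set.inter_union_distrib_left, Set.inter_eq_left.mpr hA]
    refine ⟨_, ⟨A ∩ D₁, Set.inter_subset_right, rfl⟩, _, ⟨A ∩ D₂, Set.inter_subset_right, rfl⟩, ?_⟩
    conv_rhs => rw [hsplit]
    exact (Summable.tsum_union_disjoint (hD.mono Set.inter_subset_right Set.inter_subset_right)
      (hx.subtype _) (hx.subtype _)).symm
  · rintro ⟨_, ⟨A₁, hA₁, rfl⟩, _, ⟨A₂, hA₂, rfl⟩, rfl⟩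
    exact ⟨A₁ ∪ A₂, Set.union_subset_union hA₁ hA₂,
      (Summable.tsum_union_disjoint (hD.mono hA₁ hA₂) (hx.subtype _) (hx.subtype _)).symm⟩

lemma spectre_subsumsOver_mono (hx : Summable x) {D D' : Set ℕ} (h : D ⊆ D') :
    spectre (subsumsOver x D) ⊆ spectre (subsumsOver x D') := by
  rw [← Set.sdiff_union_of_subset h, subsumsOver_union hx Set.disjoint_sdiff_left]
  exact spectre_subset_spectre_add _ _

end Subsums

section Identification

variable {X : Type*} [AddCommGroup X] [TopologicalSpace X] (x : ℕ → X) (n : ℕ)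

lemma achievementSet_eq_subsumsOver_univ : achievementSet x = subsumsOver x Set.univ := by
  simp [achievementSet, subsumsOver]

lemma initialSubsums_eq_subsumsOver : initialSubsums x n = subsumsOver x {i | i < n} := rfl

lemma remainderSubsums_eq_subsumsOver : remainderSubsums x n = subsumsOver x {i | n ≤ i} := rfl

end Identification

theorem spectre_initial_remainder_subsums (k : ℕ) (x : ℕ → EuclideanSpace ℝ (Fin k))
    (hx : Summable fun i => ‖x i‖) (n : ℕ) :
    spectre (initialSubsums x n) ⊆ spectre (initialSubsums x (n + 1)) ∧
    spectre (initialSubsums x (n + 1)) ⊆ spectre (achievementSet x) ∧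
    spectre (remainderSubsums x (n + 1)) ⊆ spectre (remainderSubsums x n) ∧
    spectre (remainderSubsums x n) ⊆ spectre (achievementSet x) := by
  have hs : Summable x := hx.of_norm
  simp only [achievementSet_eq_subsumsOver_univ, initialSubsums_eq_subsumsOver,
    remainderSubsums_eq_subsumsOver]
  exact ⟨spectre_subsumsOver_mono hs fun i (hi : i < n) => Nat.lt_succ_of_lt hi,
    spectre_subsumsOver_mono hs (Set.subset_univ _),
    spectre_subsumsOver_mono hs fun i (hi : n + 1 ≤ i) => Nat.le_of_succ_le hi,
    spectre_subsumsOver_mono hs (Set.subset_univ _)⟩
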